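/- The Dyck word abcd ∈ D^Row never occurs as a row of any picture in the well-nested Dyck language DW₁; hence ROW(DW₁) is strictly included in D^Row. -/

import Mathlib

/-- The alphabet Δ₁ = {a, b, c, d}. -/
inductive Del : Type
  | a | b | c | d
deriving DecidableEq

/-- Row cancellation: pairs [a,b] and [c,d]. -/
def rowStep (w w' : List Del) : Prop :=
  ∃ (u v : List Del),
    (w = u ++ [Del.a, Del.b] ++ v ∨ w = u ++ [Del.c, Del.d] ++ v) ∧ w' = u ++ v

/-- The row Dyck language D^Row. -/
def DRow (w : List Del) : Prop := Relation.ReflTransGen rowStep w []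

/-- Column cancellation: pairs [a,c] and [b,d]. -/
def colStep (w w' : List Del) : Prop :=
  ∃ (u v : List Del),
    (w = u ++ [Del.a, Del.c] ++ v ∨ w = u ++ [Del.b, Del.d] ++ v) ∧ w' = u ++ v

/-- The column Dyck language D^Col. -/
def DCol (w : List Del) : Prop := Relation.ReflTransGen colStep w []

/-- Row i (of length n) of a picture. -/
def row (p : ℕ → ℕ → Del) (n i : ℕ) : List Del := (List.range n).map (p i)

/-- Column j (of length m) of a picture. -/
def col (p : ℕ → ℕ → Del) (m j : ℕ) : List Del :=
  (List.range m).map (fun i => p i j)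

/-- The Dyck crossword language DC₁: nonempty pictures all of whose rows
are in D^Row and all of whose columns are in D^Col. -/
def DC (m n : ℕ) (p : ℕ → ℕ → Del) : Prop :=
  1 ≤ m ∧ 1 ≤ n ∧ (∀ i < m, DRow (row p n i)) ∧ (∀ j < n, DCol (col p m j))

/-- Dyck words over the single matching pair [a,b] (used for the top row of
an accretion frame). -/
def abStep (w w' : List Del) : Prop :=
  ∃ (u v : List Del), w = u ++ [Del.a, Del.b] ++ v ∧ w' = u ++ v

def DyckAB (w : List Del) : Prop := Relation.ReflTransGen abStep w []

/-- Dyck words over the single matching pair [a,c] (used for the left column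
of an accretion frame). -/
def acStep (w w' : List Del) : Prop :=
  ∃ (u v : List Del), w = u ++ [Del.a, Del.c] ++ v ∧ w' = u ++ v

def DyckAC (w : List Del) : Prop := Relation.ReflTransGen acStep w []

/-- The map h_r : a ↦ c, b ↦ d. -/
def hr : Del → Del
  | Del.a => Del.c
  | Del.b => Del.d
  | x => x

/-- The map h_c : a ↦ b, c ↦ d. -/
def hc : Del → Del
  | Del.a => Del.b
  | Del.c => Del.d
  | x => x

def inDom (d : ℕ × ℕ × ℕ × ℕ) (r s : ℕ) : Prop :=
  d.1 ≤ r ∧ r ≤ d.2.2.1 ∧ d.2.1 ≤ s ∧ s ≤ d.2.2.2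

/-- The well-nested Dyck language DW₁: the smallest picture language
containing the empty picture and closed under nesting accretion and the
Simplot closure (tessellation). -/
inductive DW : ℕ → ℕ → (ℕ → ℕ → Del) → Prop
  | empty (p : ℕ → ℕ → Del) : DW 0 0 p
  | accrete (m n : ℕ) (p q : ℕ → ℕ → Del) (wr wc : List Del) :
      DW m n p → DyckAB wr → DyckAC wc → wr.length = n → wc.length = m →
      q 0 0 = Del.a → q 0 (n + 1) = Del.b →
      q (m + 1) 0 = Del.c → q (m + 1) (n + 1) = Del.d →
      (∀ s < n, q 0 (s + 1) = wr.getD s Del.a) →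
      (∀ s < n, q (m + 1) (s + 1) = hr (wr.getD s Del.a)) →
      (∀ r < m, q (r + 1) 0 = wc.getD r Del.a) →
      (∀ r < m, q (r + 1) (n + 1) = hc (wc.getD r Del.a)) →
      (∀ r < m, ∀ s < n, q (r + 1) (s + 1) = p r s) →
      DW (m + 2) (n + 2) q
  | simplot (m n : ℕ) (p : ℕ → ℕ → Del) (ds : Set (ℕ × ℕ × ℕ × ℕ)) :
      1 ≤ m → 1 ≤ n →
      (∀ d ∈ ds, d.1 ≤ d.2.2.1 ∧ d.2.2.1 < m ∧ d.2.1 ≤ d.2.2.2 ∧ d.2.2.2 < n) →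
      (∀ r < m, ∀ s < n, ∃! d, d ∈ ds ∧ inDom d r s) →
      (∀ d ∈ ds, DW (d.2.2.1 - d.1 + 1) (d.2.2.2 - d.2.1 + 1)
        (fun r s => p (d.1 + r) (d.2.1 + s))) →
      DW m n p

/-- ROW(DW₁): the set of words occurring as rows of pictures of DW₁. -/
def ROWDW : Set (List Del) :=
  {w | ∃ (m n : ℕ) (p : ℕ → ℕ → Del) (i : ℕ), DW m n p ∧ i < m ∧ row p n i = w}


/-! Every tile of a tessellation in `DW₁` has even sides, so inducting down a column shows that
every tile starts in an even row. Hence a width-two picture of `DW₁` is a stack of rows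
`ab, cd, ab, cd, …`, the parity of the row deciding which. A row `abcd` of a width-four picture
cannot lie in an accretion frame, whose rows read `a … b` or `c … d`, nor in a tessellation by
two width-two strips, whose rows at the same height agree; induction on `DW₁` excludes it. On
the other hand every row of a `DW₁` picture is a concatenation of framed row-Dyck words, so it
lies in `D^Row`. -/

open Del Relation

theorem rowStep.append_append {u v : List Del} (h : rowStep u v) (s t : List Del) :
    rowStep (s ++ u ++ t) (s ++ v ++ t) := by
  obtain ⟨x, y, hu, rfl⟩ := h
  refine ⟨s ++ x, y ++ t, ?_, by simp⟩
  rcases hu with rfl | rfl <;> simp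

theorem rowStep_reflTransGen_append_append {u v : List Del} (h : ReflTransGen rowStep u v)
    (s t : List Del) : ReflTransGen rowStep (s ++ u ++ t) (s ++ v ++ t) :=
  h.lift (fun w => s ++ w ++ t) fun _ _ hw => hw.append_append s t

theorem DRow.append {u v : List Del} (hu : DRow u) (hv : DRow v) : DRow (u ++ v) := by
  simpa [DRow] using (rowStep_reflTransGen_append_append hu [] v).trans hv

theorem DRow.wrap {u : List Del} {x y : Del} (hxy : (x = a ∧ y = b) ∨ (x = c ∧ y = d))
    (hu : DRow u) : DRow (x :: (u ++ [y])) := by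
  have h : ReflTransGen rowStep (x :: (u ++ [y])) [x, y] := by
    simpa using rowStep_reflTransGen_append_append hu [x] [y]
  refine h.tail ⟨[], [], ?_, rfl⟩
  rcases hxy with ⟨rfl, rfl⟩ | ⟨rfl, rfl⟩ <;> simp

theorem DyckAB.drow_map {w : List Del} {f : Del → Del}
    (hf : (f a = a ∧ f b = b) ∨ (f a = c ∧ f b = d)) (h : DyckAB w) : DRow (w.map f) :=
  h.lift (List.map f) fun _ _ ⟨u, v, hw, hw'⟩ =>
    ⟨u.map f, v.map f, by rcases hf with ⟨h1, h2⟩ | ⟨h1, h2⟩ <;> simp [hw, h1, h2], by simp [hw']⟩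

theorem DyckAC.mem {w : List Del} (h : DyckAC w) : ∀ x ∈ w, x = a ∨ x = c := by
  induction h using ReflTransGen.head_induction_on with
  | refl => simp
  | head hs _ ih =>
    obtain ⟨u, v, rfl, rfl⟩ := hs
    intro x hx
    simp only [List.mem_append, List.mem_cons, List.not_mem_nil] at hx ih
    grind

section Rows

variable (p : ℕ → ℕ → Del)

theorem row_length (n i : ℕ) : (row p n i).length = n := by simp [row]

theorem row_add (k l i : ℕ) : row p (k + l) i = row p k i ++ row (fun r s => p r (k + s)) l i := by
  simp [row, List.range_add]

theorem row_add_two (n i : ℕ) :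
    row p (n + 2) i = p i 0 :: (row (fun r s => p r (s + 1)) n i ++ [p i (n + 1)]) := by
  rw [row, show n + 2 = n + 1 + 1 from rfl, List.range_succ, List.range_succ_eq_map]
  simp [row]

theorem row_tile {r₀ i : ℕ} (s₀ w : ℕ) (h : r₀ ≤ i) :
    row (fun r s => p (r₀ + r) (s₀ + s)) w (i - r₀) = row (fun r s => p r (s₀ + s)) w i := by
  simp [row, Nat.add_sub_cancel' h]

end Rows

theorem List.map_range_eq_map_getD {α β : Type*} {n : ℕ} {f : ℕ → α} {g : β → α} {w : List β}
    (x : β) (hlen : w.length = n) (h : ∀ s < n, f s = g (w.getD s x)) :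
    (List.range n).map f = w.map g := by
  subst hlen
  refine List.ext_getElem (by simp) fun s hs _ => ?_
  simp only [List.length_map, List.length_range] at hs
  simp [h s hs, hs]

def IsIntervalTiling {ι : Type*} (m : ℕ) (S : Set ι) (lo hi : ι → ℕ) : Prop :=
  (∀ i ∈ S, lo i ≤ hi i ∧ hi i < m) ∧ ∀ x < m, ∃! i, i ∈ S ∧ lo i ≤ x ∧ x ≤ hi i

namespace IsIntervalTiling

variable {ι : Type*} {m : ℕ} {S : Set ι} {lo hi : ι → ℕ}

theorem exists_prev (ht : IsIntervalTiling m S lo hi) {i : ι} (hiS : i ∈ S) (hpos : 0 < lo i) :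
    ∃ j ∈ S, hi j + 1 = lo i := by
  obtain ⟨hlo, hhi⟩ := ht.1 i hiS
  obtain ⟨j, ⟨hj, hjlo, hjhi⟩, -⟩ := ht.2 (lo i - 1) (by omega)
  refine ⟨j, hj, ?_⟩
  by_contra hne
  have : j = i := (ht.2 (lo i) (by omega)).unique ⟨hj, by omega, by omega⟩ ⟨hiS, le_rfl, hlo⟩
  subst this
  omega

theorem induction (ht : IsIntervalTiling m S lo hi) {P : ℕ → Prop} (h0 : P 0)
    (hstep : ∀ i ∈ S, P (lo i) → P (hi i + 1)) : (∀ i ∈ S, P (lo i)) ∧ P m := by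
  have hlo : ∀ k, ∀ i ∈ S, lo i = k → P k := by
    intro k
    induction k using Nat.strong_induction_on with
    | _ k ih =>
      rintro i hiS rfl
      rcases Nat.eq_zero_or_pos (lo i) with h | hpos
      · exact h ▸ h0
      obtain ⟨j, hj, hji⟩ := ht.exists_prev hiS hpos
      have := (ht.1 j hj).1
      exact hji ▸ hstep j hj (ih (lo j) (by omega) j hj rfl)
  refine ⟨fun i hiS => hlo _ i hiS rfl, ?_⟩
  rcases Nat.eq_zero_or_pos m with rfl | hm
  · exact h0
  obtain ⟨j, ⟨hj, hjlo, hjhi⟩, -⟩ := ht.2 (m - 1) (by omega)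
  have := (ht.1 j hj).2
  exact (show hi j + 1 = m by omega) ▸ hstep j hj (hlo _ j hj rfl)

theorem even (ht : IsIntervalTiling m S lo hi) (hlen : ∀ i ∈ S, Even (hi i - lo i + 1)) :
    (∀ i ∈ S, Even (lo i)) ∧ Even m :=
  ht.induction Even.zero fun i hiS hlo => by
    have := (ht.1 i hiS).1
    rw [show hi i + 1 = lo i + (hi i - lo i + 1) by omega]
    exact hlo.add (hlen i hiS)

end IsIntervalTiling

/-- A tile `d = (r₀, s₀, r₁, s₁)` is the rectangle `[r₀, r₁] × [s₀, s₁]`. -/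
def IsTessellation (m n : ℕ) (ds : Set (ℕ × ℕ × ℕ × ℕ)) : Prop :=
  (∀ d ∈ ds, d.1 ≤ d.2.2.1 ∧ d.2.2.1 < m ∧ d.2.1 ≤ d.2.2.2 ∧ d.2.2.2 < n) ∧
    ∀ r < m, ∀ s < n, ∃! d, d ∈ ds ∧ inDom d r s

namespace IsTessellation

variable {m n : ℕ} {ds : Set (ℕ × ℕ × ℕ × ℕ)}

theorem eq_of_inDom (ht : IsTessellation m n ds) {d d' : ℕ × ℕ × ℕ × ℕ} {r s : ℕ}
    (hr : r < m) (hs : s < n) (hd : d ∈ ds) (hd' : d' ∈ ds) (h : inDom d r s)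
    (h' : inDom d' r s) : d = d' :=
  (ht.2 r hr s hs).unique ⟨hd, h⟩ ⟨hd', h'⟩

theorem column (ht : IsTessellation m n ds) {s : ℕ} (hs : s < n) :
    IsIntervalTiling m {d ∈ ds | d.2.1 ≤ s ∧ s ≤ d.2.2.2} (·.1) (·.2.2.1) := by
  refine ⟨fun d hd => ?_, fun r hr => ?_⟩
  · have := ht.1 d hd.1
    exact ⟨this.1, this.2.1⟩
  · refine (existsUnique_congr fun d => ?_).1 (ht.2 r hr s hs)
    simp only [inDom, Set.mem_ofPred_eq]
    tauto

theorem row (ht : IsTessellation m n ds) {r : ℕ} (hr : r < m) :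
    IsIntervalTiling n {d ∈ ds | d.1 ≤ r ∧ r ≤ d.2.2.1} (·.2.1) (·.2.2.2) := by
  refine ⟨fun d hd => ?_, fun s hs => ?_⟩
  · have := ht.1 d hd.1
    exact ⟨this.2.2.1, this.2.2.2⟩
  · refine (existsUnique_congr fun d => ?_).1 (ht.2 r hr s hs)
    simp only [inDom, Set.mem_ofPred_eq]
    tauto

theorem even_fst (hh : ∀ d ∈ ds, Even (d.2.2.1 - d.1 + 1)) (ht : IsTessellation m n ds)
    {d : ℕ × ℕ × ℕ × ℕ} (hd : d ∈ ds) : Even d.1 :=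
  ((ht.column (by have := ht.1 d hd; omega : d.2.1 < n)).even fun d' hd' => hh d' hd'.1).1 d
    ⟨hd, le_rfl, (ht.1 d hd).2.2.1⟩

theorem even_dims (hh : ∀ d ∈ ds, Even (d.2.2.1 - d.1 + 1))
    (hw : ∀ d ∈ ds, Even (d.2.2.2 - d.2.1 + 1)) (ht : IsTessellation m n ds)
    (hm : 1 ≤ m) (hn : 1 ≤ n) : Even m ∧ Even n :=
  ⟨((ht.column hn).even fun d hd => hh d hd.1).2, ((ht.row hm).even fun d hd => hw d hd.1).2⟩

end IsTessellation

def stripRow (i : ℕ) : List Del := if Even i then [a, b] else [c, d]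

theorem stripRow_sub {r₀ i : ℕ} (h : Even r₀) (hle : r₀ ≤ i) : stripRow (i - r₀) = stripRow i := by
  simp only [stripRow, Nat.even_sub hle, iff_true_right h]

namespace DW

variable {m n : ℕ} {p : ℕ → ℕ → Del}

theorem eq_zero_of_width_eq_zero (h : DW m 0 p) : m = 0 := by
  cases h with
  | empty => rfl
  | simplot _ _ _ _ _ hn => omega

theorem even (h : DW m n p) : Even m ∧ Even n := by
  induction h with
  | empty => exact ⟨Even.zero, Even.zero⟩
  | accrete _ _ _ _ _ _ _ _ _ _ _ _ _ _ _ _ _ _ _ _ ih =>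
    exact ⟨ih.1.add even_two, ih.2.add even_two⟩
  | simplot _ _ _ _ hm hn hbd hcov _ ih =>
    exact IsTessellation.even_dims (fun d hd => (ih d hd).1) (fun d hd => (ih d hd).2) ⟨hbd, hcov⟩
      hm hn

theorem row_of_width_two (h : DW m 2 p) : ∀ i < m, row p 2 i = stripRow i := by
  generalize hn : 2 = n at h
  induction h with
  | empty => simp
  | accrete m' n' _ q _ _ hp _ _ _ _ h00 h01 h10 h11 _ _ _ _ _ _ =>
    obtain rfl : n' = 0 := by omega
    obtain rfl := hp.eq_zero_of_width_eq_zero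
    intro i hi
    interval_cases i <;> simp [row, List.range_succ, stripRow, h00, h01, h10, h11]
  | simplot m _ p ds _ _ hbd hcov hsub ih =>
    subst hn
    intro i hi
    have ht : IsTessellation m 2 ds := ⟨hbd, hcov⟩
    obtain ⟨d, ⟨hd, hdom⟩, -⟩ := hcov i hi 0 (by omega)
    have hb := hbd d hd
    obtain ⟨k, hk⟩ := (hsub d hd).even.2
    unfold inDom at hdom
    obtain ⟨hs₀, hs₁⟩ : d.2.1 = 0 ∧ d.2.2.2 = 1 := by omega
    have := ih d hd (by omega) (i - d.1) (by omega)
    rw [row_tile p _ _ hdom.1, hs₀, hs₁,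
      stripRow_sub (ht.even_fst (fun d hd => (hsub d hd).even.1) hd) hdom.1] at this
    simpa using this

theorem row_drow (h : DW m n p) : ∀ i < m, DRow (row p n i) := by
  induction h with
  | empty => simp
  | accrete m' n' p' q wr wc _ hwr hwc hlr hlc h00 h0n hm0 hmn htop hbot hleft hright hin ih =>
    intro i hi
    rw [row_add_two]
    rcases i with _ | r
    · have hrow : row (fun r s => q r (s + 1)) n' 0 = wr.map id :=
        List.map_range_eq_map_getD a hlr htop
      exact hrow ▸ DRow.wrap (Or.inl ⟨h00, h0n⟩) (hwr.drow_map (Or.inl ⟨rfl, rfl⟩))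
    rcases Nat.lt_succ_iff_lt_or_eq.1 (by omega : r < m' + 1) with hr | rfl
    · have hrow : row (fun r s => q r (s + 1)) n' (r + 1) = row p' n' r :=
        List.map_congr_left fun s hs => hin r hr s (List.mem_range.1 hs)
      have hmem : wc.getD r a ∈ wc := by
        rw [List.getD_eq_getElem _ _ (by omega)]
        exact List.getElem_mem _
      rw [hrow, hleft r hr, hright r hr]
      rcases hwc.mem _ hmem with h | h <;> rw [h]
      exacts [DRow.wrap (Or.inl ⟨rfl, rfl⟩) (ih r hr), DRow.wrap (Or.inr ⟨rfl, rfl⟩) (ih r hr)]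
    · have hrow : row (fun r s => q r (s + 1)) n' (r + 1) = wr.map hr :=
        List.map_range_eq_map_getD a hlr hbot
      exact hrow ▸ DRow.wrap (Or.inr ⟨hm0, hmn⟩) (hwr.drow_map (Or.inr ⟨rfl, rfl⟩))
  | simplot m n p ds _ _ hbd hcov _ ih =>
    intro i hi
    refine (IsTessellation.row ⟨hbd, hcov⟩ hi).induction (P := fun k => DRow (row p k i))
      ReflTransGen.refl (fun d ⟨hd, hdi⟩ hpre => ?_) |>.2
    have hb := hbd d hd
    have htile := ih d hd (i - d.1) (by omega)
    rw [row_tile p _ _ hdi.1] at htile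
    rw [show d.2.2.2 + 1 = d.2.1 + (d.2.2.2 - d.2.1 + 1) by omega, row_add]
    exact hpre.append htile

theorem row_tile_of_width_two {r₀ s₀ r₁ s₁ i : ℕ}
    (h : DW (r₁ - r₀ + 1) (s₁ - s₀ + 1) fun r s => p (r₀ + r) (s₀ + s)) (hs : s₁ = s₀ + 1)
    (hr₀ : Even r₀) (hr₀i : r₀ ≤ i) (hir₁ : i ≤ r₁) :
    row (fun r s => p r (s₀ + s)) 2 i = stripRow i := by
  rw [hs, show s₀ + 1 - s₀ + 1 = 2 by omega] at h
  rw [← row_tile p s₀ 2 hr₀i, h.row_of_width_two (i - r₀) (by omega), stripRow_sub hr₀ hr₀i]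

theorem row_ne_abcd (h : DW m 4 p) : ∀ i < m, row p 4 i ≠ [a, b, c, d] := by
  generalize hn : 4 = n at h
  induction h with
  | empty => simp
  | accrete m' n' _ q _ wc _ _ _ _ _ _ h0n hm0 _ _ _ hleft hright _ _ =>
    obtain rfl : n' = 2 := by omega
    intro i hi hrow
    simp only [row, List.range_succ, List.range_zero, List.nil_append, List.map_cons,
      List.map_nil, List.cons_append, List.cons.injEq] at hrow
    obtain ⟨h0, -, -, h3, -⟩ := hrow
    rcases i with _ | r
    · exact absurd (h0n.symm.trans h3) (by decide)
    rcases Nat.lt_succ_iff_lt_or_eq.1 (by omega : r < m' + 1) with hr | rfl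
    · have h3' := hright r hr
      rw [← hleft r hr, h0] at h3'
      exact absurd (h3'.symm.trans h3) (by decide)
    · exact absurd (hm0.symm.trans h0) (by decide)
  | simplot m _ p ds _ _ hbd hcov hsub ih =>
    subst hn
    intro i hi
    have ht : IsTessellation m 4 ds := ⟨hbd, hcov⟩
    have hh : ∀ d ∈ ds, Even (d.2.2.1 - d.1 + 1) := fun d hd => (hsub d hd).even.1
    obtain ⟨d, ⟨hd, hdom⟩, -⟩ := hcov i hi 0 (by omega)
    have hb := hbd d hd
    obtain ⟨k, hk⟩ := (hsub d hd).even.2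
    unfold inDom at hdom
    obtain ⟨hs₀, hs₁ | hs₁⟩ : d.2.1 = 0 ∧ (d.2.2.2 = 3 ∨ d.2.2.2 = 1) := by omega
    · have := ih d hd (by omega) (i - d.1) (by omega)
      rw [row_tile p _ _ hdom.1, hs₀, hs₁] at this
      simpa using this
    obtain ⟨d', ⟨hd', hdom'⟩, -⟩ := hcov i hi 2 (by omega)
    have hb' := hbd d' hd'
    obtain ⟨k', hk'⟩ := (hsub d' hd').even.2
    unfold inDom at hdom'
    have hs₀' : d'.2.1 = 2 := by
      by_contra hne
      have := ht.eq_of_inDom hi (by omega : 1 < 4) hd hd' ⟨hdom.1, hdom.2.1, by omega, by omega⟩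
        ⟨hdom'.1, hdom'.2.1, by omega, by omega⟩
      subst this
      omega
    have hs₁' : d'.2.2.2 = 3 := by omega
    have hleft := (hsub d hd).row_tile_of_width_two (by omega) (ht.even_fst hh hd) hdom.1 hdom.2.1
    have hright :=
      (hsub d' hd').row_tile_of_width_two (by omega) (ht.even_fst hh hd') hdom'.1 hdom'.2.1
    rw [hs₀] at hleft
    rw [hs₀'] at hright
    simp only [Nat.zero_add] at hleft
    rw [show 4 = 2 + 2 from rfl, row_add, hleft, hright, stripRow]
    split_ifs <;> simp

end DW

/-- The Dyck word `abcd` is never a row of a DW₁ picture; hence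
ROW(DW₁) ⊊ D^Row. -/
theorem abcd_not_row_of_DW :
    DRow [Del.a, Del.b, Del.c, Del.d] ∧
    [Del.a, Del.b, Del.c, Del.d] ∉ ROWDW ∧
    ROWDW ⊂ {w | DRow w} := by
  have habcd : DRow [a, b, c, d] :=
    DRow.append (u := [a, b]) (DRow.wrap (Or.inl ⟨rfl, rfl⟩) ReflTransGen.refl)
      (DRow.wrap (Or.inr ⟨rfl, rfl⟩) ReflTransGen.refl)
  have hnot : [a, b, c, d] ∉ ROWDW := by
    rintro ⟨m, n, p, i, hdw, hi, hrow⟩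
    obtain rfl : n = 4 := by simpa [row_length] using congrArg List.length hrow
    exact hdw.row_ne_abcd i hi hrow
  refine ⟨habcd, hnot, LE.le.ssubset_of_not_superset ?_ fun h => hnot (h habcd)⟩
  rintro _ ⟨m, n, p, i, hdw, hi, rfl⟩
  exact hdw.row_drow i hi
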